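/- The function r(y₁,y₂,y₃) = 1 + (1/2) sin(2πy₂) sin(2πy₃) on 𝕋³ satisfies -Σᵢ ∂ᵢ²(Aᵢᵢ r) + Σᵢ ∂ᵢ(bᵢ r) = 0 with ∫_{𝕋³} r = 1, where Aᵢᵢ(y) = (2 + sin(2πyᵢ))/(2 + sin(2πy₂)sin(2πy₃)) and bᵢ(y) = 2π cos(2πyᵢ)/(2 + sin(2πy₂)sin(2πy₃)) for i = 1,2,3, and moreover the centering condition ∫_{𝕋³} b r = 0 holds. -/

import Mathlib

/-! Since `D = 2 r`, both `Aᵢᵢ r = 1 + ½ sin(2πyᵢ)` and `bᵢ r = π cos(2πyᵢ)` depend on `yᵢ` alone,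
and `∂ᵢ(bᵢ r) = ∂ᵢ²(Aᵢᵢ r) = -2π² sin(2πyᵢ)`: the equation holds term by term. The integrals over
the cube factor into one-dimensional integrals, and `sin(2πt)`, `cos(2πt)` have mean zero on `[0, 1]`. -/

open MeasureTheory

/-- The unit cube, a fundamental domain of the torus `ℝᵈ/ℤᵈ`. -/
def cube (d : ℕ) : Set (Fin d → ℝ) := Set.Icc 0 1

/-- Partial derivative `∂ᵢ f` of a function on `ℝᵈ`. -/
noncomputable def pd {d : ℕ} (i : Fin d) (f : (Fin d → ℝ) → ℝ) :
    (Fin d → ℝ) → ℝ := fun x => fderiv ℝ f x (Pi.single i 1)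

open Real

lemma pd_comp_eval {d : ℕ} {g g' : ℝ → ℝ} (hg : ∀ t, HasDerivAt g (g' t) t) (i : Fin d) :
    pd i (fun x : Fin d → ℝ => g (x i)) = fun x => g' (x i) := by
  funext x
  have h := (hg (x i)).comp_hasFDerivAt x (hasFDerivAt_apply (𝕜 := ℝ) (F' := fun _ => ℝ) i x)
  rw [pd, show (fun x : Fin d → ℝ => g (x i)) = g ∘ fun f => f i from rfl, h.fderiv]
  simp

lemma hasDerivAt_one_add_sin_two_pi_mul_div_two (t : ℝ) :
    HasDerivAt (fun t => 1 + sin (2 * π * t) / 2) (π * cos (2 * π * t)) t := by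
  have h := (((hasDerivAt_id t).const_mul (2 * π)).sin.div_const 2).const_add 1
  exact h.congr_deriv (by simp only [id]; ring)

lemma hasDerivAt_pi_mul_cos_two_pi_mul (t : ℝ) :
    HasDerivAt (fun t => π * cos (2 * π * t)) (-(2 * π ^ 2 * sin (2 * π * t))) t := by
  have h := ((hasDerivAt_id t).const_mul (2 * π)).cos.const_mul π
  exact h.congr_deriv (by simp only [id]; ring)

lemma integral_Icc_sin_two_pi_mul : ∫ t in Set.Icc (0 : ℝ) 1, sin (2 * π * t) = 0 := by
  rw [integral_Icc_eq_integral_Ioc, ← intervalIntegral.integral_of_le zero_le_one,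
    intervalIntegral.integral_comp_mul_left sin (by positivity : 2 * π ≠ 0)]
  simp [integral_sin, cos_two_pi]

lemma integral_Icc_cos_two_pi_mul : ∫ t in Set.Icc (0 : ℝ) 1, cos (2 * π * t) = 0 := by
  rw [integral_Icc_eq_integral_Ioc, ← intervalIntegral.integral_of_le zero_le_one,
    intervalIntegral.integral_comp_mul_left cos (by positivity : 2 * π ≠ 0)]
  simp [integral_cos, sin_two_pi]

lemma volume_real_cube (d : ℕ) : volume.real (cube d) = 1 := by
  simp [cube, measureReal_def, Real.volume_Icc_pi_toReal]

lemma cube_eq_pi (d : ℕ) : cube d = Set.univ.pi fun _ => Set.Icc 0 1 :=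
  (Set.pi_univ_Icc 0 1).symm

lemma setIntegral_cube_prod {d : ℕ} (f : Fin d → ℝ → ℝ) :
    ∫ y in cube d, ∏ i, f i (y i) = ∏ i, ∫ t in Set.Icc (0 : ℝ) 1, f i t := by
  rw [cube_eq_pi, volume_pi, Measure.restrict_pi_pi]
  exact integral_fintype_prod_eq_prod (ι := Fin d) f

lemma setIntegral_cube_comp_eval {d : ℕ} (g : ℝ → ℝ) (i : Fin d) :
    ∫ y in cube d, g (y i) = ∫ t in Set.Icc (0 : ℝ) 1, g t := by
  set f : Fin d → ℝ → ℝ := fun j => if j = i then g else fun _ => 1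
  calc ∫ y in cube d, g (y i) = ∫ y in cube d, ∏ j, f j (y j) := by
        simp [f, ite_apply, Finset.prod_ite_eq']
    _ = ∫ t in Set.Icc (0 : ℝ) 1, f i t :=
        (setIntegral_cube_prod f).trans
          (Finset.prod_eq_single i (fun j _ hj => by simp [f, hj]) (by simp))
    _ = ∫ t in Set.Icc (0 : ℝ) 1, g t := by simp [f]

lemma Continuous.integrableOn_cube {d : ℕ} {f : (Fin d → ℝ) → ℝ} (hf : Continuous f) :
    IntegrableOn f (cube d) :=
  hf.integrableOn_Icc

lemma setIntegral_cube_sin_two_pi_mul_sin_two_pi_mul :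
    ∫ y in cube 3, sin (2 * π * y 1) * sin (2 * π * y 2) = 0 := by
  simpa [Fin.prod_univ_three, integral_Icc_sin_two_pi_mul] using
    setIntegral_cube_prod ![fun _ => 1, fun t => sin (2 * π * t), fun t => sin (2 * π * t)]

lemma two_add_sin_mul_sin_pos (a b : ℝ) : 0 < 2 + sin a * sin b := by
  nlinarith [sin_le_one a, neg_one_le_sin a, sin_le_one b, neg_one_le_sin b]

/-- The function `r(y₁,y₂,y₃) = 1 + ½ sin(2πy₂) sin(2πy₃)` on `𝕋³` solves
`-Σᵢ ∂ᵢ²(Aᵢᵢ r) + Σᵢ ∂ᵢ(bᵢ r) = 0` for the stated diagonal diffusion matrix `A`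
and drift `b`, with `∫ r = 1` and the centering condition `∫ b r = 0`. -/
theorem stmt7 :
    let r : (Fin 3 → ℝ) → ℝ := fun y =>
      1 + (1 / 2) * Real.sin (2 * Real.pi * y 1) * Real.sin (2 * Real.pi * y 2)
    let D : (Fin 3 → ℝ) → ℝ := fun y =>
      2 + Real.sin (2 * Real.pi * y 1) * Real.sin (2 * Real.pi * y 2)
    let A : Fin 3 → (Fin 3 → ℝ) → ℝ := fun i y =>
      (2 + Real.sin (2 * Real.pi * y i)) / D y
    let b : Fin 3 → (Fin 3 → ℝ) → ℝ := fun i y =>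
      (2 * Real.pi * Real.cos (2 * Real.pi * y i)) / D y
    (∀ y, -(∑ i, pd i (pd i (fun x => A i x * r x)) y)
        + ∑ i, pd i (fun x => b i x * r x) y = 0) ∧
    (∫ y in cube 3, r y) = 1 ∧
    (∀ i, (∫ y in cube 3, b i y * r y) = 0) := by
  intro r D A b
  have hAr (i : Fin 3) : (fun x => A i x * r x) = fun x => 1 + sin (2 * π * x i) / 2 := by
    funext x
    have := two_add_sin_mul_sin_pos (2 * π * x 1) (2 * π * x 2)
    simp only [A, r, D]; field_simp
  have hbr (i : Fin 3) : (fun x => b i x * r x) = fun x => π * cos (2 * π * x i) := by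
    funext x
    have := two_add_sin_mul_sin_pos (2 * π * x 1) (2 * π * x 2)
    simp only [b, r, D]; field_simp
  refine ⟨fun y => ?_, ?_, fun i => ?_⟩
  · simp only [hAr, hbr, pd_comp_eval hasDerivAt_one_add_sin_two_pi_mul_div_two,
      pd_comp_eval hasDerivAt_pi_mul_cos_two_pi_mul]
    ring
  · have hr (y : Fin 3 → ℝ) : r y = 1 + 1 / 2 * (sin (2 * π * y 1) * sin (2 * π * y 2)) := by
      simp only [r]; ring
    simp only [hr]
    rw [integral_add continuous_const.integrableOn_cube
        (Continuous.integrableOn_cube (by fun_prop)), integral_const_mul,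
      setIntegral_cube_sin_two_pi_mul_sin_two_pi_mul]
    simp [volume_real_cube]
  · rw [hbr, setIntegral_cube_comp_eval (fun t => π * cos (2 * π * t)), integral_const_mul,
      integral_Icc_cos_two_pi_mul, mul_zero]
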